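/- arXiv:1103.2310 — 5 statements merged into one kernel-verified Lean document; each statement's English description precedes it below -/
import Mathlib

section
/- Let X be an integrable adapted stochastic process on a filtered probability space, and let H be a sub-σ-algebra of F_0. Suppose X has H-conditionally independent increments (for all s ≤ t, the increment X_t − X_s is independent of F_s conditionally on H) and H-conditionally symmetric increments (E[f(X_t − X_s) | H] = E[f(X_s − X_t) | H] for all bounded measurable f). Then X is a martingale. -/
/-!
Truncating the increment `D = X t - X s` at level `n` by an odd function `φₙ` keeps it bounded.
By conditional symmetry `E[φₙ(D) | H] = E[φₙ(-D) | H] = -E[φₙ(D) | H]`, so `φₙ(D)` is conditionally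
centred, and conditional independence then gives `E[φₙ(D) 1_A | H] = E[φₙ(D) | H] P(A | H) = 0`
for `A ∈ ℱ s`. Hence `∫_A φₙ(D) = 0`, and dominated convergence yields `∫_A D = 0`, which is the
martingale property.
-/

open MeasureTheory ProbabilityTheory Filter Topology

/-- Unlike `ProbabilityTheory.truncation`, which cuts on `Ioc (-r) r`, this truncation is odd. -/
noncomputable def symmTruncation (r x : ℝ) : ℝ := if |x| ≤ r then x else 0

theorem measurable_symmTruncation (r : ℝ) : Measurable (symmTruncation r) :=
  Measurable.ite (measurableSet_le measurable_abs measurable_const) measurable_id measurable_const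

theorem symmTruncation_neg (r x : ℝ) : symmTruncation r (-x) = -symmTruncation r x := by
  unfold symmTruncation
  split_ifs <;> simp_all

theorem abs_symmTruncation_le_abs (r x : ℝ) : |symmTruncation r x| ≤ |x| := by
  unfold symmTruncation
  split_ifs <;> simp

theorem abs_symmTruncation_le (r x : ℝ) : |symmTruncation r x| ≤ |r| := by
  unfold symmTruncation
  split_ifs with h
  · exact h.trans (le_abs_self r)
  · simp

theorem tendsto_symmTruncation (x : ℝ) : Tendsto (fun n : ℕ => symmTruncation n x) atTop (𝓝 x) :=
  tendsto_atTop_of_eventually_const (i₀ := ⌈|x|⌉₊) fun _ hn =>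
    if_pos ((Nat.le_ceil _).trans (Nat.cast_le.mpr hn))

theorem tendsto_integral_symmTruncation {Ω : Type*} {m0 : MeasurableSpace Ω} {μ : Measure Ω}
    {D : Ω → ℝ} (hD : Integrable D μ) :
    Tendsto (fun n : ℕ => ∫ ω, symmTruncation n (D ω) ∂μ) atTop (𝓝 (∫ ω, D ω ∂μ)) :=
  tendsto_integral_of_dominated_convergence (fun ω => |D ω|)
    (fun n =>
      ((measurable_symmTruncation n).comp_aemeasurable hD.aemeasurable).aestronglyMeasurable)
    hD.abs (fun n => ae_of_all _ fun ω => abs_symmTruncation_le_abs n (D ω))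
    (ae_of_all _ fun ω => tendsto_symmTruncation (D ω))

section CondExp

variable {Ω : Type*} {m m0 : MeasurableSpace Ω} {μ : Measure Ω}

theorem condExp_ae_eq_zero_of_condExp_neg {Y : Ω → ℝ} (h : μ[Y | m] =ᵐ[μ] μ[-Y | m]) :
    μ[Y | m] =ᵐ[μ] 0 := by
  filter_upwards [h.trans (condExp_neg Y m)] with ω hω
  simp only [Pi.neg_apply] at hω
  simp only [Pi.zero_apply]
  linarith

theorem integral_mul_eq_zero_of_condExp_eq_zero (hm : m ≤ m0) [SigmaFinite (μ.trim hm)]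
    {Y Z : Ω → ℝ} (hYZ : μ[Y * Z | m] =ᵐ[μ] μ[Y | m] * μ[Z | m]) (hY : μ[Y | m] =ᵐ[μ] 0) :
    ∫ ω, Y ω * Z ω ∂μ = 0 := by
  have hYZ0 : μ[Y * Z | m] =ᵐ[μ] 0 := by
    filter_upwards [hYZ, hY] with ω hω hω0
    simp [hω, hω0]
  rw [← Pi.mul_def, ← integral_condExp hm, integral_congr_ae hYZ0]
  simp

end CondExp

theorem martingale_of_setIntegral_eq {Ω ι E : Type*} {m0 : MeasurableSpace Ω} {μ : Measure Ω}
    [IsFiniteMeasure μ] [Preorder ι] [NormedAddCommGroup E] [NormedSpace ℝ E] [CompleteSpace E]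
    {ℱ : Filtration ι m0} {f : ι → Ω → E}
    (hadp : StronglyAdapted ℱ f) (hint : ∀ i, Integrable (f i) μ)
    (hf : ∀ i j, i ≤ j → ∀ s : Set Ω, MeasurableSet[ℱ i] s →
      ∫ ω in s, f i ω ∂μ = ∫ ω in s, f j ω ∂μ) :
    Martingale f ℱ μ :=
  ⟨hadp, fun i j hij => (ae_eq_condExp_of_forall_setIntegral_eq (ℱ.le i) (hint j)
    (fun _ _ _ => (hint i).integrableOn) (fun s hs _ => hf i j hij s hs)
    (hadp i).aestronglyMeasurable).symm⟩

/-- A process with `H`-conditionally independent and `H`-conditionally symmetric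
increments, which is integrable and adapted, is a martingale. -/
theorem martingale_of_condIndep_condSymm_increments
    {Ω : Type*} {m0 : MeasurableSpace Ω} {μ : Measure Ω} [IsProbabilityMeasure μ]
    (ℱ : Filtration ℝ m0) (H : MeasurableSpace Ω) (hH : H ≤ ℱ 0)
    (X : ℝ → Ω → ℝ)
    (hadapted : Adapted ℱ X)
    (hint : ∀ t : ℝ, Integrable (X t) μ)
    (hindep : ∀ s t : ℝ, s ≤ t → ∀ f : ℝ → ℝ, Measurable f → (∃ C, ∀ x, |f x| ≤ C) →
      ∀ Z : Ω → ℝ, StronglyMeasurable[ℱ s] Z → (∃ C, ∀ ω, |Z ω| ≤ C) →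
      μ[fun ω => f (X t ω - X s ω) * Z ω | H]
        =ᵐ[μ] fun ω => (μ[fun ω' => f (X t ω' - X s ω') | H]) ω * (μ[Z | H]) ω)
    (hsymm : ∀ s t : ℝ, ∀ f : ℝ → ℝ, Measurable f → (∃ C, ∀ x, |f x| ≤ C) →
      μ[fun ω => f (X t ω - X s ω) | H] =ᵐ[μ] μ[fun ω => f (X s ω - X t ω) | H]) :
    Martingale X ℱ μ := by
  refine martingale_of_setIntegral_eq hadapted.stronglyAdapted hint fun s t hst A hA => ?_
  have hHm0 : H ≤ m0 := hH.trans (ℱ.le 0)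
  have hbdd (r : ℝ) : ∃ C, ∀ x, |symmTruncation r x| ≤ C := ⟨|r|, abs_symmTruncation_le r⟩
  have hcentered (r : ℝ) : μ[fun ω => symmTruncation r (X t ω - X s ω) | H] =ᵐ[μ] 0 := by
    refine condExp_ae_eq_zero_of_condExp_neg ?_
    convert hsymm s t _ (measurable_symmTruncation r) (hbdd r) using 3 with ω
    rw [← neg_sub, symmTruncation_neg, Pi.neg_apply]
  have hindicator : StronglyMeasurable[ℱ s] (A.indicator fun _ => (1 : ℝ)) :=
    stronglyMeasurable_const.indicator hA
  have hindicator_le : ∃ C, ∀ ω, |A.indicator (fun _ => (1 : ℝ)) ω| ≤ C :=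
    ⟨1, fun ω => by by_cases h : ω ∈ A <;> simp [h]⟩
  have htrunc (n : ℕ) : ∫ ω in A, symmTruncation n (X t ω - X s ω) ∂μ = 0 := by
    have := integral_mul_eq_zero_of_condExp_eq_zero hHm0
      (hindep s t hst _ (measurable_symmTruncation n) (hbdd n) _ hindicator hindicator_le)
      (hcentered n)
    rw [← integral_indicator (ℱ.le s A hA), ← this]
    congr with ω
    by_cases h : ω ∈ A <;> simp [h]
  have hincrement : ∫ ω in A, (X t ω - X s ω) ∂μ = 0 :=
    tendsto_nhds_unique (tendsto_integral_symmTruncation ((hint t).sub (hint s)).integrableOn)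
      (by simp only [htrunc, tendsto_const_nhds])
  rw [integral_sub (hint t).integrableOn (hint s).integrableOn, sub_eq_zero] at hincrement
  exact hincrement.symm
end

section
/- Let ξ₁, ξ₂ be independent, square-integrable, symmetric real random variables (ξ_i equal in law to −ξ_i). Then E[(ξ₁+ξ₂)² | σ(ξ₁², ξ₂²)] = ξ₁² + ξ₂² almost surely; consequently, for every convex function f: R → R such that both sides are integrable, E[f((ξ₁+ξ₂)²)] ≥ E[f(ξ₁² + ξ₂²)], i.e. (ξ₁+ξ₂)² dominates ξ₁²+ξ₂² in convex order. -/
open MeasureTheory ProbabilityTheory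

/-!
Negating `ξ₁` preserves the joint law of `(ξ₁, ξ₂)` (independence and symmetry of `ξ₁`) and
fixes `(ξ₁², ξ₂²)`, so the cross term `ξ₁ ξ₂` of `(ξ₁ + ξ₂)²` integrates to zero over every
event of `σ(ξ₁², ξ₂²)`. Hence `E[(ξ₁ + ξ₂)² | ξ₁², ξ₂²] = ξ₁² + ξ₂²`, and the convex order is
conditional Jensen integrated.
-/

namespace ProbabilityTheory

variable {Ω α β : Type*} {m0 : MeasurableSpace Ω} {μ : Measure Ω}
  [MeasurableSpace α] [MeasurableSpace β]

theorem identDistrib_prod_neg_fst [IsFiniteMeasure μ] [Neg α] [MeasurableNeg α]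
    {X : Ω → α} {Y : Ω → β} (hX : AEMeasurable X μ) (hY : AEMeasurable Y μ)
    (hXY : IndepFun X Y μ) (hsymm : μ.map X = μ.map (fun ω => -X ω)) :
    IdentDistrib (fun ω => (X ω, Y ω)) (fun ω => (-X ω, Y ω)) μ μ where
  aemeasurable_fst := hX.prodMk hY
  aemeasurable_snd := hX.neg.prodMk hY
  map_eq := by
    have hnegXY : IndepFun (fun ω => -X ω) Y μ := hXY.comp measurable_neg measurable_id
    rw [(indepFun_iff_map_prod_eq_prod_map_map hX hY).1 hXY, hsymm]
    exact ((indepFun_iff_map_prod_eq_prod_map_map hX.neg hY).1 hnegXY).symm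

theorem IdentDistrib.integral_comp_eq_zero_of_odd [Neg α]
    {X : Ω → α} {Y : Ω → β}
    (hXY : IdentDistrib (fun ω => (X ω, Y ω)) (fun ω => (-X ω, Y ω)) μ μ)
    {g : α × β → ℝ} (hg : Measurable g) (hodd : ∀ x y, g (-x, y) = -g (x, y)) :
    ∫ ω, g (X ω, Y ω) ∂μ = 0 := by
  have h := (hXY.comp hg).integral_eq
  simp only [Function.comp_def, hodd, integral_neg] at h
  linarith

theorem condExp_mul_comap_sq_ae_eq_zero [IsFiniteMeasure μ] {X Y : Ω → ℝ} (hX : Measurable X)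
    (hY : Measurable Y)
    (hXY : IdentDistrib (fun ω => (X ω, Y ω)) (fun ω => (-X ω, Y ω)) μ μ) :
    μ[fun ω => X ω * Y ω | MeasurableSpace.comap (fun ω => (X ω ^ 2, Y ω ^ 2)) inferInstance]
      =ᵐ[μ] 0 := by
  set squares : ℝ × ℝ → ℝ × ℝ := fun p => (p.1 ^ 2, p.2 ^ 2)
  have hsq : Measurable squares := by fun_prop
  set G := MeasurableSpace.comap (fun ω => (X ω ^ 2, Y ω ^ 2)) inferInstance
  have hle : G ≤ m0 := (hsq.comp (hX.prodMk hY)).comap_le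
  by_cases hint : Integrable (fun ω => X ω * Y ω) μ
  swap
  · rw [condExp_of_not_integrable hint]
  refine (ae_eq_condExp_of_forall_setIntegral_eq hle hint (fun _ _ _ => integrableOn_zero)
    (fun s hs _ => ?_) stronglyMeasurable_const.aestronglyMeasurable).symm
  obtain ⟨B, hB, rfl⟩ := hs
  have hS : MeasurableSet (squares ⁻¹' B) := hsq hB
  rw [integral_zero, show (fun ω => (X ω ^ 2, Y ω ^ 2)) ⁻¹' B
    = (fun ω => (X ω, Y ω)) ⁻¹' (squares ⁻¹' B) from rfl,
    ← integral_indicator ((hX.prodMk hY) hS)]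
  symm
  refine hXY.integral_comp_eq_zero_of_odd (g := (squares ⁻¹' B).indicator fun p => p.1 * p.2)
    ((measurable_fst.mul measurable_snd).indicator hS) fun x y => ?_
  have hmem : (-x, y) ∈ squares ⁻¹' B ↔ (x, y) ∈ squares ⁻¹' B := by
    simp only [Set.mem_preimage, squares, neg_sq]
  by_cases h : (x, y) ∈ squares ⁻¹' B
  · rw [Set.indicator_of_mem (hmem.2 h), Set.indicator_of_mem h, neg_mul]
  · rw [Set.indicator_of_notMem (mt hmem.1 h), Set.indicator_of_notMem h, neg_zero]

theorem condExp_add_sq_comap_sq_ae_eq [IsFiniteMeasure μ] {X Y : Ω → ℝ} (hX : Measurable X)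
    (hY : Measurable Y)
    (hXY : IdentDistrib (fun ω => (X ω, Y ω)) (fun ω => (-X ω, Y ω)) μ μ)
    (hX2 : MemLp X 2 μ) (hY2 : MemLp Y 2 μ) :
    μ[fun ω => (X ω + Y ω) ^ 2 | MeasurableSpace.comap (fun ω => (X ω ^ 2, Y ω ^ 2)) inferInstance]
      =ᵐ[μ] fun ω => X ω ^ 2 + Y ω ^ 2 := by
  set G := MeasurableSpace.comap (fun ω => (X ω ^ 2, Y ω ^ 2)) inferInstance
  have hle : G ≤ m0 := ((hX.pow_const 2).prodMk (hY.pow_const 2)).comap_le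
  have hsum : StronglyMeasurable[G] fun ω => X ω ^ 2 + Y ω ^ 2 :=
    ((measurable_fst.add measurable_snd).comp (Measurable.of_comap_le le_rfl)).stronglyMeasurable
  have hsum_int : Integrable (fun ω => X ω ^ 2 + Y ω ^ 2) μ :=
    hX2.integrable_sq.add hY2.integrable_sq
  have hprod_int : Integrable (fun ω => X ω * Y ω) μ := hX2.integrable_mul hY2
  have hsplit : (fun ω => (X ω + Y ω) ^ 2)
      = (fun ω => X ω ^ 2 + Y ω ^ 2) + (2 : ℝ) • fun ω => X ω * Y ω := by
    funext ω
    simp only [Pi.add_apply, Pi.smul_apply, smul_eq_mul]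
    ring
  rw [hsplit]
  filter_upwards [condExp_add hsum_int (hprod_int.smul (2 : ℝ)) G,
    condExp_smul (2 : ℝ) (fun ω => X ω * Y ω) G, condExp_mul_comap_sq_ae_eq_zero hX hY hXY]
    with ω h_add h_smul h_zero
  rw [h_add, Pi.add_apply, condExp_of_stronglyMeasurable hle hsum hsum_int, h_smul,
    Pi.smul_apply, h_zero]
  simp

end ProbabilityTheory

theorem ConvexOn.integral_comp_le_of_condExp_ae_eq {Ω E : Type*} {m m0 : MeasurableSpace Ω}
    {μ : Measure Ω} [NormedAddCommGroup E] [NormedSpace ℝ E] [FiniteDimensional ℝ E]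
    (hm : m ≤ m0) [SigmaFinite (μ.trim hm)] {φ : E → ℝ} (hφ : ConvexOn ℝ Set.univ φ)
    {X Y : Ω → E} (hYX : μ[Y | m] =ᵐ[μ] X) (hY : Integrable Y μ)
    (hφY : Integrable (fun ω => φ (Y ω)) μ) (hφX : Integrable (fun ω => φ (X ω)) μ) :
    ∫ ω, φ (X ω) ∂μ ≤ ∫ ω, φ (Y ω) ∂μ := by
  have hφYX : φ ∘ μ[Y | m] =ᵐ[μ] φ ∘ X := hYX.fun_comp φ
  calc ∫ ω, φ (X ω) ∂μ = ∫ ω, φ (μ[Y | m] ω) ∂μ := integral_congr_ae hφYX.symm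
    _ ≤ ∫ ω, μ[φ ∘ Y | m] ω ∂μ :=
        integral_mono_ae (hφX.congr hφYX.symm) integrable_condExp
          (hφ.map_condExp_le_of_finiteDimensional hm hY hφY)
    _ = ∫ ω, φ (Y ω) ∂μ := integral_condExp hm

theorem sq_sum_condexp_and_convex_order_general
    {Ω : Type*} {m0 : MeasurableSpace Ω} {μ : Measure Ω} [IsProbabilityMeasure μ]
    (ξ₁ ξ₂ : Ω → ℝ) (hm₁ : Measurable ξ₁) (hm₂ : Measurable ξ₂)
    (hindep : IndepFun ξ₁ ξ₂ μ)
    (hsq₁ : Integrable (fun ω => ξ₁ ω ^ 2) μ) (hsq₂ : Integrable (fun ω => ξ₂ ω ^ 2) μ)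
    (hsymm₁ : Measure.map ξ₁ μ = Measure.map (fun ω => -ξ₁ ω) μ) :
    (μ[fun ω => (ξ₁ ω + ξ₂ ω) ^ 2 |
        MeasurableSpace.comap (fun ω => (ξ₁ ω ^ 2, ξ₂ ω ^ 2)) inferInstance]
      =ᵐ[μ] fun ω => ξ₁ ω ^ 2 + ξ₂ ω ^ 2) ∧
    ∀ f : ℝ → ℝ, ConvexOn ℝ Set.univ f →
      Integrable (fun ω => f ((ξ₁ ω + ξ₂ ω) ^ 2)) μ →
      Integrable (fun ω => f (ξ₁ ω ^ 2 + ξ₂ ω ^ 2)) μ →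
      ∫ ω, f (ξ₁ ω ^ 2 + ξ₂ ω ^ 2) ∂μ ≤ ∫ ω, f ((ξ₁ ω + ξ₂ ω) ^ 2) ∂μ := by
  have hL2₁ : MemLp ξ₁ 2 μ := (memLp_two_iff_integrable_sq hm₁.aestronglyMeasurable).2 hsq₁
  have hL2₂ : MemLp ξ₂ 2 μ := (memLp_two_iff_integrable_sq hm₂.aestronglyMeasurable).2 hsq₂
  have hcondExp := condExp_add_sq_comap_sq_ae_eq hm₁ hm₂
    (identDistrib_prod_neg_fst hm₁.aemeasurable hm₂.aemeasurable hindep hsymm₁) hL2₁ hL2₂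
  exact ⟨hcondExp, fun f hf hf_sq_sum hf_sum_sq => hf.integral_comp_le_of_condExp_ae_eq
    ((hm₁.pow_const 2).prodMk (hm₂.pow_const 2)).comap_le hcondExp
    (hL2₁.add hL2₂).integrable_sq hf_sq_sum hf_sum_sq⟩

/-- For independent, square-integrable, symmetric random variables `ξ₁, ξ₂`,
the conditional expectation of `(ξ₁ + ξ₂)²` given `σ(ξ₁², ξ₂²)` is `ξ₁² + ξ₂²`;
consequently `(ξ₁ + ξ₂)²` dominates `ξ₁² + ξ₂²` in convex order. -/
theorem sq_sum_condexp_and_convex_order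
    {Ω : Type*} {m0 : MeasurableSpace Ω} {μ : Measure Ω} [IsProbabilityMeasure μ]
    (ξ₁ ξ₂ : Ω → ℝ) (hm₁ : Measurable ξ₁) (hm₂ : Measurable ξ₂)
    (hindep : IndepFun ξ₁ ξ₂ μ)
    (hsq₁ : Integrable (fun ω => ξ₁ ω ^ 2) μ) (hsq₂ : Integrable (fun ω => ξ₂ ω ^ 2) μ)
    (hsymm₁ : Measure.map ξ₁ μ = Measure.map (fun ω => -ξ₁ ω) μ)
    (hsymm₂ : Measure.map ξ₂ μ = Measure.map (fun ω => -ξ₂ ω) μ) :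
    (μ[fun ω => (ξ₁ ω + ξ₂ ω) ^ 2 |
        MeasurableSpace.comap (fun ω => (ξ₁ ω ^ 2, ξ₂ ω ^ 2)) inferInstance]
      =ᵐ[μ] fun ω => ξ₁ ω ^ 2 + ξ₂ ω ^ 2) ∧
    ∀ f : ℝ → ℝ, ConvexOn ℝ Set.univ f →
      Integrable (fun ω => f ((ξ₁ ω + ξ₂ ω) ^ 2)) μ →
      Integrable (fun ω => f (ξ₁ ω ^ 2 + ξ₂ ω ^ 2)) μ →
      ∫ ω, f (ξ₁ ω ^ 2 + ξ₂ ω ^ 2) ∂μ ≤ ∫ ω, f ((ξ₁ ω + ξ₂ ω) ^ 2) ∂μ :=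
  sq_sum_condexp_and_convex_order_general (m0 := m0) ξ₁ ξ₂ hm₁ hm₂ hindep hsq₁ hsq₂ hsymm₁
end

section
/- Let ξ₁, …, ξ_n be independent, square-integrable, symmetric real random variables and let S_k = ξ₁ + … + ξ_k denote partial sums. Then for every convex function f with the relevant expectations finite, E[f((S_n)²)] ≥ E[f(Σ_{k=1}^n ξ_k²)]. More generally, for any coarsening of the index set into consecutive blocks B₁,…,B_m, E[f(Σ_{j=1}^m (Σ_{k∈B_j} ξ_k)²)] ≥ E[f(Σ_{k=1}^n ξ_k²)] — i.e. realized variance over a coarser partition dominates realized variance over a finer partition in convex order. -/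
open MeasureTheory ProbabilityTheory Finset

/-!
Flipping the signs of any subset of the `ξ k` does not change their joint law, by independence
and symmetry. Hence the coarse realized variance `Q(ξ)` has the same law as `Q(ε ξ)` for every
sign vector `ε`. Averaging `Q(ε x)` over all `2 ^ n` sign vectors kills the cross terms
`x k * x l` and leaves exactly the fine realized variance `∑ k, x k ^ 2`, so Jensen's inequality
for the uniform average gives `f (∑ k, ξ k ^ 2) ≤ 2⁻ⁿ ∑_ε f (Q (ε ξ))`, whose expectation is
`E f (Q ξ)`.
-/

-- A sign vector `ε ∈ {±1}^ℕ` with finitely many `-1`s is encoded by the set where it is `-1`.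
noncomputable def flipSign (s : Finset ℕ) (k : ℕ) : ℝ := if k ∈ s then -1 else 1

noncomputable def realizedVariance (c : ℕ → ℕ) (m : ℕ) (x : ℕ → ℝ) : ℝ :=
  ∑ j ∈ range m, (∑ k ∈ Ico (c j) (c (j + 1)), x k) ^ 2

lemma flipSign_mul_self (s : Finset ℕ) (k : ℕ) : flipSign s k * flipSign s k = 1 := by
  unfold flipSign; split_ifs <;> norm_num

lemma sum_powerset_flipSign_mul {A : Finset ℕ} {k : ℕ} (hk : k ∈ A) (l : ℕ) :
    ∑ s ∈ A.powerset, flipSign s k * flipSign s l = if k = l then (2 : ℝ) ^ #A else 0 := by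
  rcases eq_or_ne k l with rfl | hkl
  · simp [flipSign_mul_self]
  rw [if_neg hkl, ← insert_erase hk, sum_powerset_insert (notMem_erase k A),
    ← sum_add_distrib]
  refine sum_eq_zero fun t ht => ?_
  have hkt : k ∉ t := fun h => notMem_erase k A (mem_powerset.1 ht h)
  -- adding `k` to `t` flips the sign at `k` but not at `l ≠ k`
  simp only [flipSign, mem_insert, hkt, hkl.symm, true_or, false_or, if_true, if_false]
  split_ifs <;> norm_num

lemma sum_powerset_sq_sum_flipSign_mul {A B : Finset ℕ} (hBA : B ⊆ A) (x : ℕ → ℝ) :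
    ∑ s ∈ A.powerset, (∑ k ∈ B, flipSign s k * x k) ^ 2 = 2 ^ #A * ∑ k ∈ B, x k ^ 2 := by
  have hexpand : ∀ s : Finset ℕ, (∑ k ∈ B, flipSign s k * x k) ^ 2
      = ∑ k ∈ B, ∑ l ∈ B, x k * x l * (flipSign s k * flipSign s l) := fun s => by
    rw [sq, sum_mul_sum]
    exact sum_congr rfl fun k _ => sum_congr rfl fun l _ => by ring
  simp_rw [hexpand]
  rw [sum_comm, mul_sum]
  refine sum_congr rfl fun k hk => ?_
  rw [sum_comm]
  simp_rw [← mul_sum, sum_powerset_flipSign_mul (hBA hk), mul_ite, mul_zero, sum_ite_eq,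
    if_pos hk]
  ring

lemma sum_range_sum_Ico_of_monotone {M : Type*} [AddCommMonoid M] {c : ℕ → ℕ} (hc : Monotone c)
    (g : ℕ → M) (m : ℕ) :
    ∑ j ∈ range m, ∑ k ∈ Ico (c j) (c (j + 1)), g k = ∑ k ∈ Ico (c 0) (c m), g k := by
  induction m with
  | zero => simp
  | succ m ih =>
    rw [sum_range_succ, ih, sum_Ico_consecutive _ (hc m.zero_le) (hc m.le_succ)]

lemma sum_powerset_realizedVariance_flipSign_mul {c : ℕ → ℕ} (hc : Monotone c) {m n : ℕ}
    (hc0 : c 0 = 0) (hcm : c m = n) (x : ℕ → ℝ) :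
    ∑ s ∈ (range n).powerset, realizedVariance c m (fun k => flipSign s k * x k)
      = 2 ^ n * ∑ k ∈ range n, x k ^ 2 := by
  have hblock : ∀ j ∈ range m, Ico (c j) (c (j + 1)) ⊆ range n := fun j hj => by
    rw [range_eq_Ico, ← hc0, ← hcm]
    exact Ico_subset_Ico (hc j.zero_le) (hc (mem_range.1 hj))
  unfold realizedVariance
  rw [sum_comm, sum_congr rfl fun j hj => sum_powerset_sq_sum_flipSign_mul (hblock j hj) x,
    ← mul_sum, sum_range_sum_Ico_of_monotone hc, hc0, hcm, card_range, range_eq_Ico]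

lemma ConvexOn.map_uniform_average_le {ι : Type*} {f : ℝ → ℝ} (hf : ConvexOn ℝ Set.univ f)
    {t : Finset ι} (ht : t.Nonempty) (p : ι → ℝ) :
    f ((#t : ℝ)⁻¹ * ∑ i ∈ t, p i) ≤ (#t : ℝ)⁻¹ * ∑ i ∈ t, f (p i) := by
  have hw : ∑ _i ∈ t, (#t : ℝ)⁻¹ = 1 := by
    rw [sum_const, nsmul_eq_mul, mul_inv_cancel₀ (by exact_mod_cast ht.card_ne_zero)]
  simpa only [smul_eq_mul, mul_sum] using
    hf.map_sum_le (fun _ _ => by positivity) hw (fun _ _ => Set.mem_univ _)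

lemma map_flipSign_mul_eq {Ω : Type*} {m0 : MeasurableSpace Ω} {μ : Measure Ω} {X : Ω → ℝ}
    (hX : μ.map X = μ.map (fun ω => -X ω)) (s : Finset ℕ) (k : ℕ) :
    μ.map (fun ω => flipSign s k * X ω) = μ.map X := by
  unfold flipSign
  split_ifs
  · simp only [neg_one_mul, hX]
  · simp only [one_mul]

section SignFlipInvariance

variable {Ω : Type*} {m0 : MeasurableSpace Ω} {μ : Measure Ω} {ξ : ℕ → Ω → ℝ}

lemma identDistrib_flipSign_mul (hm : ∀ k, Measurable (ξ k)) (hindep : iIndepFun ξ μ)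
    (hsymm : ∀ k, μ.map (ξ k) = μ.map (fun ω => -ξ k ω)) (s : Finset ℕ) :
    IdentDistrib (fun ω k => flipSign s k * ξ k ω) (fun ω k => ξ k ω) μ μ where
  aemeasurable_fst := (measurable_pi_lambda _ fun k => (hm k).const_mul _).aemeasurable
  aemeasurable_snd := (measurable_pi_lambda _ hm).aemeasurable
  map_eq := by
    rw [(hindep.comp (fun k x => flipSign s k * x) fun k => measurable_const_mul _)
        |>.map_fun_eq_infinitePi_map fun k => (hm k).const_mul _,
      hindep.map_fun_eq_infinitePi_map hm]
    exact congrArg _ (funext fun k => map_flipSign_mul_eq (hsymm k) s k)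

lemma integral_comp_le_of_sum_powerset_flipSign_eq (hm : ∀ k, Measurable (ξ k))
    (hindep : iIndepFun ξ μ) (hsymm : ∀ k, μ.map (ξ k) = μ.map (fun ω => -ξ k ω))
    {A : Finset ℕ} {Q R : (ℕ → ℝ) → ℝ} (hQ : Measurable Q)
    (hR : ∀ x, ∑ s ∈ A.powerset, Q (fun k => flipSign s k * x k) = 2 ^ #A * R x)
    {f : ℝ → ℝ} (hf : ConvexOn ℝ Set.univ f)
    (hfQ : Integrable (fun ω => f (Q (ξ · ω))) μ) (hfR : Integrable (fun ω => f (R (ξ · ω))) μ) :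
    ∫ ω, f (R (ξ · ω)) ∂μ ≤ ∫ ω, f (Q (ξ · ω)) ∂μ := by
  have hfQ_meas : Measurable (f ∘ Q) :=
    (continuousOn_univ.mp (hf.continuousOn isOpen_univ)).measurable.comp hQ
  have hident : ∀ s : Finset ℕ, IdentDistrib (fun ω => f (Q fun k => flipSign s k * ξ k ω))
      (fun ω => f (Q (ξ · ω))) μ μ := fun s =>
    (identDistrib_flipSign_mul hm hindep hsymm s).comp hfQ_meas
  have hcard : (#A.powerset : ℝ) = 2 ^ #A := by rw [card_powerset]; push_cast; rfl
  have hjensen : ∀ ω, f (R (ξ · ω))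
      ≤ (#A.powerset : ℝ)⁻¹ * ∑ s ∈ A.powerset, f (Q fun k => flipSign s k * ξ k ω) := by
    intro ω
    have hR' : R (ξ · ω)
        = (#A.powerset : ℝ)⁻¹ * ∑ s ∈ A.powerset, Q fun k => flipSign s k * ξ k ω := by
      rw [hR, hcard, inv_mul_cancel_left₀ (by positivity)]
    rw [hR']
    exact hf.map_uniform_average_le A.powerset_nonempty _
  have hint : ∀ s : Finset ℕ, Integrable (fun ω => f (Q fun k => flipSign s k * ξ k ω)) μ :=
    fun s => (hident s).integrable_iff.mpr hfQ
  calc ∫ ω, f (R (ξ · ω)) ∂μ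
      ≤ ∫ ω, (#A.powerset : ℝ)⁻¹ * ∑ s ∈ A.powerset, f (Q fun k => flipSign s k * ξ k ω) ∂μ :=
        integral_mono hfR ((integrable_finsetSum _ fun s _ => hint s).const_mul _) hjensen
    _ = (#A.powerset : ℝ)⁻¹ * ∑ s ∈ A.powerset, ∫ ω, f (Q (ξ · ω)) ∂μ := by
        rw [integral_const_mul, integral_finsetSum _ fun s _ => hint s]
        simp_rw [(hident _).integral_eq]
    _ = ∫ ω, f (Q (ξ · ω)) ∂μ := by
        rw [sum_const, nsmul_eq_mul, inv_mul_cancel_left₀ (by positivity)]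

end SignFlipInvariance

theorem coarse_rv_convex_order_dominates_fine_rv_general
    {Ω : Type*} {m0 : MeasurableSpace Ω} {μ : Measure Ω}
    (n : ℕ) (ξ : ℕ → Ω → ℝ) (hm : ∀ k, Measurable (ξ k))
    (hindep : iIndepFun ξ μ)
    (hsymm : ∀ k, Measure.map (ξ k) μ = Measure.map (fun ω => -ξ k ω) μ) :
    -- special case: the squared total sum dominates the sum of squares
    (∀ f : ℝ → ℝ, ConvexOn ℝ Set.univ f →
      Integrable (fun ω => f ((∑ k ∈ range n, ξ k ω) ^ 2)) μ →
      Integrable (fun ω => f (∑ k ∈ range n, ξ k ω ^ 2)) μ →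
      ∫ ω, f (∑ k ∈ range n, ξ k ω ^ 2) ∂μ
        ≤ ∫ ω, f ((∑ k ∈ range n, ξ k ω) ^ 2) ∂μ) ∧
    -- general case: any coarsening into consecutive blocks
    (∀ (m : ℕ) (c : ℕ → ℕ), Monotone c → c 0 = 0 → c m = n →
      ∀ f : ℝ → ℝ, ConvexOn ℝ Set.univ f →
        Integrable (fun ω => f (∑ j ∈ range m, (∑ k ∈ Ico (c j) (c (j + 1)), ξ k ω) ^ 2)) μ →
        Integrable (fun ω => f (∑ k ∈ range n, ξ k ω ^ 2)) μ →
        ∫ ω, f (∑ k ∈ range n, ξ k ω ^ 2) ∂μ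
          ≤ ∫ ω, f (∑ j ∈ range m, (∑ k ∈ Ico (c j) (c (j + 1)), ξ k ω) ^ 2) ∂μ) := by
  refine ⟨fun f hf hfQ hfR => ?_, fun m c hc hc0 hcm f hf hfQ hfR => ?_⟩
  · refine integral_comp_le_of_sum_powerset_flipSign_eq hm hindep hsymm (A := range n)
      (Q := fun x => (∑ k ∈ range n, x k) ^ 2) (R := fun x => ∑ k ∈ range n, x k ^ 2)
      (by fun_prop) (fun x => ?_) hf hfQ hfR
    exact sum_powerset_sq_sum_flipSign_mul subset_rfl x
  · refine integral_comp_le_of_sum_powerset_flipSign_eq hm hindep hsymm (A := range n)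
      (Q := realizedVariance c m) (R := fun x => ∑ k ∈ range n, x k ^ 2)
      (by unfold realizedVariance; fun_prop) (fun x => ?_) hf hfQ hfR
    rw [card_range]
    exact sum_powerset_realizedVariance_flipSign_mul hc hc0 hcm x

/-- For independent, square-integrable, symmetric random variables, the realized variance
over a coarser partition (into consecutive blocks) dominates the realized variance over the
finest partition in convex order; in particular the square of the full sum dominates the sum
of squares. -/
theorem coarse_rv_convex_order_dominates_fine_rv
    {Ω : Type*} {m0 : MeasurableSpace Ω} {μ : Measure Ω} [IsProbabilityMeasure μ]
    (n : ℕ) (ξ : ℕ → Ω → ℝ) (hm : ∀ k, Measurable (ξ k))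
    (hindep : iIndepFun ξ μ)
    (hsq : ∀ k, Integrable (fun ω => ξ k ω ^ 2) μ)
    (hsymm : ∀ k, Measure.map (ξ k) μ = Measure.map (fun ω => -ξ k ω) μ) :
    -- special case: the squared total sum dominates the sum of squares
    (∀ f : ℝ → ℝ, ConvexOn ℝ Set.univ f →
      Integrable (fun ω => f ((∑ k ∈ range n, ξ k ω) ^ 2)) μ →
      Integrable (fun ω => f (∑ k ∈ range n, ξ k ω ^ 2)) μ →
      ∫ ω, f (∑ k ∈ range n, ξ k ω ^ 2) ∂μ
        ≤ ∫ ω, f ((∑ k ∈ range n, ξ k ω) ^ 2) ∂μ) ∧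
    -- general case: any coarsening into consecutive blocks
    (∀ (m : ℕ) (c : ℕ → ℕ), Monotone c → c 0 = 0 → c m = n →
      ∀ f : ℝ → ℝ, ConvexOn ℝ Set.univ f →
        Integrable (fun ω => f (∑ j ∈ range m, (∑ k ∈ Ico (c j) (c (j + 1)), ξ k ω) ^ 2)) μ →
        Integrable (fun ω => f (∑ k ∈ range n, ξ k ω ^ 2)) μ →
        ∫ ω, f (∑ k ∈ range n, ξ k ω ^ 2) ∂μ
          ≤ ∫ ω, f (∑ j ∈ range m, (∑ k ∈ Ico (c j) (c (j + 1)), ξ k ω) ^ 2) ∂μ) :=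
  coarse_rv_convex_order_dominates_fine_rv_general (m0 := m0) n ξ hm hindep hsymm
end

section
/- Let ξ₁, …, ξ_n be independent, square-integrable, symmetric real random variables, and let b₁, …, b_n be real constants. Then for every increasing convex function f with finite expectations, E[f(Σ_{k=1}^n (ξ_k + b_k)²)] ≥ E[f(Σ_{k=1}^n ξ_k²)]. (This is the discrete analogue of the increasing convex order between realized variance of a drift-perturbed process and the quadratic variation of its martingale part.) -/
/-!
Independence and symmetry make `(ξ_k)_k` and `(-ξ_k)_k` equal in law, so
`E f(Σ (ξ_k - b_k)²) = E f(Σ (ξ_k + b_k)²)`. Pointwise, `Σ ξ_k²` lies below the average of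
`Σ (ξ_k + b_k)²` and `Σ (ξ_k - b_k)²` (the average is `Σ ξ_k² + Σ b_k²`), so for increasing
convex `f`, `f(Σ ξ_k²)` lies below the average of the two values of `f`; integrate.
-/

open MeasureTheory ProbabilityTheory Finset

theorem ProbabilityTheory.iIndepFun.identDistrib_neg {ι Ω β : Type*} {mΩ : MeasurableSpace Ω}
    {μ : Measure Ω} [IsProbabilityMeasure μ] [MeasurableSpace β] [Neg β] [MeasurableNeg β]
    {X : ι → Ω → β} (hX : ∀ i, Measurable (X i)) (hindep : iIndepFun X μ)
    (hsymm : ∀ i, μ.map (X i) = μ.map (fun ω => -X i ω)) :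
    IdentDistrib (fun ω i => X i ω) (fun ω i => -X i ω) μ μ where
  aemeasurable_fst := (measurable_pi_lambda _ hX).aemeasurable
  aemeasurable_snd := (measurable_pi_lambda _ fun i => (hX i).neg).aemeasurable
  map_eq := by
    have hneg : iIndepFun (fun i ω => -X i ω) μ :=
      hindep.comp (fun _ => Neg.neg) fun _ => measurable_neg
    rw [hindep.map_fun_eq_infinitePi_map hX,
      hneg.map_fun_eq_infinitePi_map (X := fun i ω => -X i ω) fun i => (hX i).neg]
    simp_rw [hsymm]

theorem ConvexOn.apply_le_average_of_monotone {f : ℝ → ℝ} (hconv : ConvexOn ℝ Set.univ f)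
    (hmono : Monotone f) {a x y : ℝ} (h : a ≤ (x + y) / 2) :
    f a ≤ (f x + f y) / 2 := by
  have := hconv.2 (Set.mem_univ x) (Set.mem_univ y) (by norm_num : (0 : ℝ) ≤ 1/2)
    (by norm_num : (0 : ℝ) ≤ 1/2) (by norm_num)
  simp only [smul_eq_mul] at this
  calc f a ≤ f (1/2 * x + 1/2 * y) := hmono (by linarith)
    _ ≤ _ := by linarith

theorem sum_sq_le_average_sum_sq_add_sub {ι : Type*} (s : Finset ι) (x b : ι → ℝ) :
    ∑ i ∈ s, x i ^ 2 ≤ (∑ i ∈ s, (x i + b i) ^ 2 + ∑ i ∈ s, (x i - b i) ^ 2) / 2 := by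
  have hmid : (∑ i ∈ s, (x i + b i) ^ 2 + ∑ i ∈ s, (x i - b i) ^ 2) / 2
      = ∑ i ∈ s, x i ^ 2 + ∑ i ∈ s, b i ^ 2 := by
    rw [← sum_add_distrib, ← sum_add_distrib, sum_div]
    exact sum_congr rfl fun i _ => by ring
  rw [hmid]
  exact le_add_of_nonneg_right (sum_nonneg fun i _ => sq_nonneg _)

theorem drifted_rv_icx_dominates_rv_general
    {Ω : Type*} {m0 : MeasurableSpace Ω} {μ : Measure Ω} [IsProbabilityMeasure μ]
    (n : ℕ) (ξ : ℕ → Ω → ℝ) (b : ℕ → ℝ) (hm : ∀ k, Measurable (ξ k))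
    (hindep : iIndepFun ξ μ)
    (hsymm : ∀ k, Measure.map (ξ k) μ = Measure.map (fun ω => -ξ k ω) μ) :
    ∀ f : ℝ → ℝ, ConvexOn ℝ Set.univ f → Monotone f →
      Integrable (fun ω => f (∑ k ∈ range n, (ξ k ω + b k) ^ 2)) μ →
      Integrable (fun ω => f (∑ k ∈ range n, ξ k ω ^ 2)) μ →
      ∫ ω, f (∑ k ∈ range n, ξ k ω ^ 2) ∂μ
        ≤ ∫ ω, f (∑ k ∈ range n, (ξ k ω + b k) ^ 2) ∂μ := by
  intro f hconv hmono hint_plus hint_base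
  -- Reflecting `ξ ↦ -ξ` preserves the joint law and turns `ξ - b` into `-(ξ + b)`.
  have hreflect : IdentDistrib (fun ω => f (∑ k ∈ range n, (ξ k ω - b k) ^ 2))
      (fun ω => f (∑ k ∈ range n, (ξ k ω + b k) ^ 2)) μ μ := by
    have hg : Measurable fun x : ℕ → ℝ => f (∑ k ∈ range n, (x k - b k) ^ 2) :=
      hmono.measurable.comp <| Finset.measurable_sum _ fun k _ =>
        ((measurable_pi_apply k).sub_const _).pow_const 2
    convert (hindep.identDistrib_neg hm hsymm).comp hg using 1
    · rfl
    · funext ω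
      simp only [Function.comp_apply]
      congr 1
      exact sum_congr rfl fun k _ => by ring
  have hint_minus := hreflect.integrable_iff.mpr hint_plus
  calc ∫ ω, f (∑ k ∈ range n, ξ k ω ^ 2) ∂μ
      ≤ ∫ ω, (f (∑ k ∈ range n, (ξ k ω + b k) ^ 2)
          + f (∑ k ∈ range n, (ξ k ω - b k) ^ 2)) / 2 ∂μ :=
        integral_mono hint_base ((hint_plus.add hint_minus).div_const 2) fun ω =>
          hconv.apply_le_average_of_monotone hmono (sum_sq_le_average_sum_sq_add_sub _ _ _)
    _ = ∫ ω, f (∑ k ∈ range n, (ξ k ω + b k) ^ 2) ∂μ := by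
        rw [integral_div, integral_add hint_plus hint_minus, hreflect.integral_eq]
        ring

/-- For independent, square-integrable, symmetric random variables `ξ_k` and deterministic
drifts `b_k`, the drift-perturbed realized variance `Σ (ξ_k + b_k)²` dominates `Σ ξ_k²`
in increasing convex order. -/
theorem drifted_rv_icx_dominates_rv
    {Ω : Type*} {m0 : MeasurableSpace Ω} {μ : Measure Ω} [IsProbabilityMeasure μ]
    (n : ℕ) (ξ : ℕ → Ω → ℝ) (b : ℕ → ℝ) (hm : ∀ k, Measurable (ξ k))
    (hindep : iIndepFun ξ μ)
    (hsq : ∀ k, Integrable (fun ω => ξ k ω ^ 2) μ)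
    (hsymm : ∀ k, Measure.map (ξ k) μ = Measure.map (fun ω => -ξ k ω) μ) :
    ∀ f : ℝ → ℝ, ConvexOn ℝ Set.univ f → Monotone f →
      Integrable (fun ω => f (∑ k ∈ range n, (ξ k ω + b k) ^ 2)) μ →
      Integrable (fun ω => f (∑ k ∈ range n, ξ k ω ^ 2)) μ →
      ∫ ω, f (∑ k ∈ range n, ξ k ω ^ 2) ∂μ
        ≤ ∫ ω, f (∑ k ∈ range n, (ξ k ω + b k) ^ 2) ∂μ :=
  drifted_rv_icx_dominates_rv_general (m0 := m0) n ξ b hm hindep hsymm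
end

section
/- Let Y and Z be integrable random variables with E[Y] = E[Z] and suppose E[f(Y)] ≥ E[f(Z)] for all increasing convex functions f for which both expectations are finite. Then E[f(Y)] ≥ E[f(Z)] for all convex functions f for which both expectations are finite; i.e. increasing convex order together with equal means implies convex order. -/
/-!
Let `t` be the right derivative of the convex function `f` at `c`, and replace `f` on `(-∞, c]`
by its right tangent line at `c`. Subtracting `t x` from the result leaves a nondecreasing convex
function, so the increasing convex order and the equality of means compare its expectations.
As `c → -∞` these functions converge pointwise to `f`, squeezed between the right tangent at `0`
and `f`, so dominated convergence transfers the inequality to `f`.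
-/

open MeasureTheory Set Filter Topology

noncomputable section

def rightTangent (f : ℝ → ℝ) (a x : ℝ) : ℝ := f a + derivWithin f (Ioi a) a * (x - a)

def tangentBelow (f : ℝ → ℝ) (c x : ℝ) : ℝ := if x ≤ c then rightTangent f c x else f x

end

lemma tangentBelow_sub_rightDeriv_mul (f : ℝ → ℝ) (c x : ℝ) :
    tangentBelow f c x - derivWithin f (Ioi c) c * x =
      f (max x c) - derivWithin f (Ioi c) c * max x c := by
  rw [tangentBelow, rightTangent]
  split_ifs with hxc
  · rw [max_eq_right hxc]; ring
  · rw [max_eq_left (not_le.1 hxc).le]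

lemma tendsto_tangentBelow_atBot (f : ℝ → ℝ) (x : ℝ) :
    Tendsto (fun c ↦ tangentBelow f c x) atBot (𝓝 (f x)) :=
  tendsto_const_nhds.congr' <| (eventually_lt_atBot x).mono fun c hc ↦ by
    simp [tangentBelow, not_le.2 hc]

namespace ConvexOn

variable {f : ℝ → ℝ}

lemma rightTangent_le (hf : ConvexOn ℝ univ f) (a x : ℝ) : rightTangent f a x ≤ f x := by
  have ha : a ∈ interior univ := by simp
  rw [rightTangent]
  rcases lt_trichotomy x a with hxa | rfl | hax
  · have h := (hf.slope_le_leftDeriv_of_mem_interior (mem_univ x) ha hxa).trans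
      (hf.leftDeriv_le_rightDeriv_of_mem_interior ha)
    rw [slope_def_field, div_le_iff₀ (sub_pos.2 hxa)] at h
    linarith
  · simp
  · have h := hf.rightDeriv_le_slope_of_mem_interior ha (mem_univ x) hax
    rw [slope_def_field, le_div_iff₀ (sub_pos.2 hax)] at h
    linarith

lemma monotone_rightDeriv (hf : ConvexOn ℝ univ f) :
    Monotone fun x ↦ derivWithin f (Ioi x) x := by
  simpa using hf.monotoneOn_rightDeriv

lemma monotoneOn_sub_rightDeriv_mul (hf : ConvexOn ℝ univ f) (c : ℝ) :
    MonotoneOn (fun y ↦ f y - derivWithin f (Ioi c) c * y) (Ici c) := by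
  intro x hcx y _ hxy
  have htan := hf.rightTangent_le x y
  have hslope := hf.monotone_rightDeriv hcx
  simp only [rightTangent] at htan
  nlinarith

lemma rightTangent_le_tangentBelow (hf : ConvexOn ℝ univ f) {a c : ℝ} (hca : c ≤ a) (x : ℝ) :
    rightTangent f a x ≤ tangentBelow f c x := by
  rw [tangentBelow]
  split_ifs with hxc
  · have htan := hf.rightTangent_le a c
    have hslope := hf.monotone_rightDeriv hca
    simp only [rightTangent] at htan ⊢
    nlinarith
  · exact hf.rightTangent_le a x

lemma tangentBelow_le (hf : ConvexOn ℝ univ f) (c x : ℝ) : tangentBelow f c x ≤ f x := by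
  rw [tangentBelow]
  split_ifs
  exacts [hf.rightTangent_le c x, le_rfl]

lemma monotone_tangentBelow_sub_rightDeriv_mul (hf : ConvexOn ℝ univ f) (c : ℝ) :
    Monotone fun x ↦ tangentBelow f c x - derivWithin f (Ioi c) c * x := by
  intro x y hxy
  simp only [tangentBelow_sub_rightDeriv_mul]
  exact hf.monotoneOn_sub_rightDeriv_mul c (le_max_right x c) (le_max_right y c)
    (max_le_max_right c hxy)

lemma convexOn_tangentBelow_sub_rightDeriv_mul (hf : ConvexOn ℝ univ f) (c : ℝ) :
    ConvexOn ℝ univ fun x ↦ tangentBelow f c x - derivWithin f (Ioi c) c * x := by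
  simp only [tangentBelow_sub_rightDeriv_mul]
  have hmax : ConvexOn ℝ univ fun x : ℝ ↦ max x c :=
    (convexOn_id convex_univ).sup (convexOn_const c convex_univ)
  have himage : (fun x : ℝ ↦ max x c) '' univ = Ici c :=
    Set.ext fun y ↦ ⟨by rintro ⟨x, -, rfl⟩; exact le_max_right x c,
      fun hy ↦ ⟨y, mem_univ y, max_eq_left hy⟩⟩
  have hlin : ConcaveOn ℝ univ fun y : ℝ ↦ derivWithin f (Ioi c) c * y :=
    (LinearMap.mulLeft ℝ (derivWithin f (Ioi c) c)).concaveOn convex_univ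
  have hconv : ConvexOn ℝ ((fun x : ℝ ↦ max x c) '' univ)
      fun y ↦ f y - derivWithin f (Ioi c) c * y := by
    rw [himage]; exact (hf.sub hlin).subset (subset_univ _) (convex_Ici c)
  have hmono : MonotoneOn (fun y ↦ f y - derivWithin f (Ioi c) c * y)
      ((fun x : ℝ ↦ max x c) '' univ) := by
    rw [himage]; exact hf.monotoneOn_sub_rightDeriv_mul c
  exact hconv.comp hmax hmono

lemma continuous_tangentBelow (hf : ConvexOn ℝ univ f) (c : ℝ) :
    Continuous (tangentBelow f c) := by
  have hfc : Continuous f := continuousOn_univ.1 (hf.continuousOn isOpen_univ)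
  exact Continuous.if_le (by unfold rightTangent; fun_prop) hfc continuous_id continuous_const
    fun x hx ↦ by simp [hx, rightTangent]

end ConvexOn

section Integral

variable {Ω : Type*} {m : MeasurableSpace Ω} {μ : Measure Ω} [IsFiniteMeasure μ] {X : Ω → ℝ}

lemma integrable_rightTangent_comp (hX : Integrable X μ) (f : ℝ → ℝ) (a : ℝ) :
    Integrable (fun ω ↦ rightTangent f a (X ω)) μ :=
  (integrable_const _).add ((hX.sub (integrable_const a)).const_mul _)

variable {f : ℝ → ℝ}

lemma ConvexOn.integrable_tangentBelow_comp (hf : ConvexOn ℝ univ f) (hX : Integrable X μ)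
    (hfX : Integrable (fun ω ↦ f (X ω)) μ) (c : ℝ) :
    Integrable (fun ω ↦ tangentBelow f c (X ω)) μ :=
  integrable_of_le_of_le
    ((hf.continuous_tangentBelow c).comp_aestronglyMeasurable hX.aestronglyMeasurable)
    (ae_of_all _ fun ω ↦ hf.rightTangent_le_tangentBelow le_rfl (X ω))
    (ae_of_all _ fun ω ↦ hf.tangentBelow_le c (X ω))
    (integrable_rightTangent_comp hX f c) hfX

lemma ConvexOn.tendsto_integral_tangentBelow_comp (hf : ConvexOn ℝ univ f)
    (hX : Integrable X μ) (hfX : Integrable (fun ω ↦ f (X ω)) μ) :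
    Tendsto (fun c ↦ ∫ ω, tangentBelow f c (X ω) ∂μ) atBot (𝓝 (∫ ω, f (X ω) ∂μ)) := by
  refine tendsto_integral_filter_of_dominated_convergence
    (fun ω ↦ |f (X ω)| + |rightTangent f 0 (X ω)|)
    (Eventually.of_forall fun c ↦ (hf.integrable_tangentBelow_comp hX hfX c).aestronglyMeasurable)
    ?_ (hfX.abs.add (integrable_rightTangent_comp hX f 0).abs)
    (ae_of_all _ fun ω ↦ tendsto_tangentBelow_atBot f (X ω))
  filter_upwards [eventually_le_atBot 0] with c hc
  refine ae_of_all _ fun ω ↦ ?_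
  rw [Real.norm_eq_abs, add_comm]
  exact (abs_le_max_abs_abs (hf.rightTangent_le_tangentBelow hc (X ω))
    (hf.tangentBelow_le c (X ω))).trans (max_le_add_of_nonneg (abs_nonneg _) (abs_nonneg _))

end Integral

lemma integral_comp_le_of_icx_of_integral_eq {Ω₁ Ω₂ : Type*} {m₁ : MeasurableSpace Ω₁}
    {m₂ : MeasurableSpace Ω₂} {μ : Measure Ω₁} {ν : Measure Ω₂} {Y : Ω₁ → ℝ} {Z : Ω₂ → ℝ}
    (hY : Integrable Y μ) (hZ : Integrable Z ν) (hmean : ∫ ω, Y ω ∂μ = ∫ ω, Z ω ∂ν)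
    (hicx : ∀ g : ℝ → ℝ, ConvexOn ℝ univ g → Monotone g →
      Integrable (fun ω ↦ g (Y ω)) μ → Integrable (fun ω ↦ g (Z ω)) ν →
      ∫ ω, g (Z ω) ∂ν ≤ ∫ ω, g (Y ω) ∂μ)
    {h : ℝ → ℝ} (s : ℝ) (hconv : ConvexOn ℝ univ fun x ↦ h x - s * x)
    (hmono : Monotone fun x ↦ h x - s * x)
    (hhY : Integrable (fun ω ↦ h (Y ω)) μ) (hhZ : Integrable (fun ω ↦ h (Z ω)) ν) :
    ∫ ω, h (Z ω) ∂ν ≤ ∫ ω, h (Y ω) ∂μ := by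
  have hle := hicx _ hconv hmono (hhY.sub (hY.const_mul s)) (hhZ.sub (hZ.const_mul s))
  rw [integral_sub hhZ (hZ.const_mul s), integral_sub hhY (hY.const_mul s), integral_const_mul,
    integral_const_mul, hmean] at hle
  linarith

/-- Increasing convex order together with equal means implies convex order
(Shaked–Shanthikumar, Thm. 4.A.35). -/
theorem icx_order_and_eq_mean_implies_cx_order
    {Ω₁ Ω₂ : Type*} {m₁ : MeasurableSpace Ω₁} {m₂ : MeasurableSpace Ω₂}
    {μ : Measure Ω₁} {ν : Measure Ω₂}
    [IsProbabilityMeasure μ] [IsProbabilityMeasure ν]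
    (Y : Ω₁ → ℝ) (Z : Ω₂ → ℝ) (hY : Integrable Y μ) (hZ : Integrable Z ν)
    (hmean : ∫ ω, Y ω ∂μ = ∫ ω, Z ω ∂ν)
    (hicx : ∀ f : ℝ → ℝ, ConvexOn ℝ Set.univ f → Monotone f →
      Integrable (fun ω => f (Y ω)) μ → Integrable (fun ω => f (Z ω)) ν →
      ∫ ω, f (Z ω) ∂ν ≤ ∫ ω, f (Y ω) ∂μ) :
    ∀ f : ℝ → ℝ, ConvexOn ℝ Set.univ f →
      Integrable (fun ω => f (Y ω)) μ → Integrable (fun ω => f (Z ω)) ν →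
      ∫ ω, f (Z ω) ∂ν ≤ ∫ ω, f (Y ω) ∂μ := by
  intro f hf hfY hfZ
  refine le_of_tendsto_of_tendsto' (hf.tendsto_integral_tangentBelow_comp hZ hfZ)
    (hf.tendsto_integral_tangentBelow_comp hY hfY) fun c ↦ ?_
  exact integral_comp_le_of_icx_of_integral_eq hY hZ hmean hicx _
    (hf.convexOn_tangentBelow_sub_rightDeriv_mul c) (hf.monotone_tangentBelow_sub_rightDeriv_mul c)
    (hf.integrable_tangentBelow_comp hY hfY c) (hf.integrable_tangentBelow_comp hZ hfZ c)
end
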